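/- arXiv:2103.03085 — 2 statements merged into one kernel-verified Lean document; each statement's English description precedes it below -/
import Mathlib

section
/- For every h ∈ Y = {0,1}^n, the diagonal matrix entry of F at h satisfies ⟨h|F|h⟩ = 1 − 2^{−n}, and consequently |⟨h|F|h⟩|² ≥ 1 − 2·2^{−n}. -/
open scoped Matrix Kronecker

noncomputable section

/-- The ℓ²→ℓ² operator norm of a square complex matrix. -/
def opNorm {I : Type*} [Fintype I] [DecidableEq I] (A : Matrix I I ℂ) : ℝ :=
  ‖Matrix.toEuclideanCLM (𝕜 := ℂ) A‖

/-- The commutator [A,B] = AB - BA. -/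
def commM {I : Type*} [Fintype I] (A B : Matrix I I ℂ) : Matrix I I ℂ := A * B - B * A

/-- Euclidean norm of a vector in ℂ^I. -/
def vnorm {I : Type*} [Fintype I] (v : I → ℂ) : ℝ := Real.sqrt (∑ i, ‖v i‖ ^ 2)

/-- Y = {0,1}^n. -/
abbrev Yb (n : ℕ) := Fin n → Bool
/-- Ȳ = Y ∪ {⊥}. -/
abbrev Ybar (n : ℕ) := Option (Yb n)

/-- standard basis vector |a⟩. -/
def ket {n : ℕ} (a : Ybar n) : Ybar n → ℂ := fun b => if b = a then 1 else 0

/-- (-1)^{η⋅y}. -/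
def signDot {n : ℕ} (η y : Yb n) : ℂ := (-1 : ℂ) ^ (Finset.univ.filter fun i => η i && y i).card

/-- 2^{-n/2}. -/
def cst (n : ℕ) : ℝ := (2 : ℝ) ^ (-(n : ℝ) / 2)

/-- |φ_η⟩ = 2^{-n/2} ∑_y (-1)^{η⋅y} |y⟩. -/
def phi {n : ℕ} (η : Yb n) : Ybar n → ℂ :=
  fun a => Option.casesOn a 0 fun y => (cst n : ℂ) * signDot η y

/-- |φ_0⟩. -/
def phi0 (n : ℕ) : Ybar n → ℂ := phi fun _ => false

/-- The Walsh–Hadamard transform on ℂ^Y, extended by the identity on |⊥⟩. -/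
def Hbar (n : ℕ) : Matrix (Ybar n) (Ybar n) ℂ :=
  Matrix.of fun a b =>
    match a, b with
    | none, none => 1
    | some y, some y' => (cst n : ℂ) * signDot y y'
    | _, _ => 0

/-- The involution exchanging ⊥ and 0^n. -/
def swapBot (n : ℕ) : Ybar n → Ybar n :=
  fun a =>
    Option.casesOn a (some fun _ => false) fun y =>
      if y = (fun _ => false) then none else some y

/-- The permutation matrix exchanging |⊥⟩ and |0^n⟩. -/
def Sswap (n : ℕ) : Matrix (Ybar n) (Ybar n) ℂ :=
  Matrix.of fun a b => if a = swapBot n b then 1 else 0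

/-- F = H̄ ⬝ S ⬝ H̄. -/
def Fmat (n : ℕ) : Matrix (Ybar n) (Ybar n) ℂ := Hbar n * Sswap n * Hbar n

/-- Γ_x = |{y : (x,y) ∈ R}|. -/
def Gam {n : ℕ} {X : Type*} [Fintype X] (R : X → Yb n → Prop) [∀ x, DecidablePred (R x)]
    (x : X) : ℕ :=
  (Finset.univ.filter fun y => R x y).card

/-- Γ_R = max_x Γ_x. -/
def GamR {n : ℕ} {X : Type*} [Fintype X] (R : X → Yb n → Prop) [∀ x, DecidablePred (R x)] : ℕ :=
  Finset.univ.sup fun x => Gam R x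

/-- whether an entry a ∈ Ȳ satisfies the relation at x (⊥ never does). -/
def hitB {n : ℕ} {X : Type*} (R : X → Yb n → Prop) [∀ x, DecidablePred (R x)] (x : X) :
    Ybar n → Bool :=
  fun a => Option.casesOn a false fun y => decide (R x y)

/-- The projection Π^x = ∑_{y : (x,y)∈R} |y⟩⟨y| on ℂ^Ȳ. -/
def Pix {n : ℕ} {X : Type*} (R : X → Yb n → Prop) [∀ x, DecidablePred (R x)] (x : X) :
    Matrix (Ybar n) (Ybar n) ℂ :=
  Matrix.diagonal fun a => if hitB R x a then 1 else 0

/-- bitwise xor. -/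
def xorY {n : ℕ} (y y' : Yb n) : Yb n := fun i => xor (y i) (y' i)

/-- CNOT on Y × Ȳ (control Ȳ, target Y), acting trivially on |y⟩⊗|⊥⟩. -/
def cnotFun (n : ℕ) : Yb n × Ybar n → Yb n × Ybar n :=
  fun p => Option.casesOn p.2 p fun y' => (xorY p.1 y', p.2)

def CNOTmat (n : ℕ) : Matrix (Yb n × Ybar n) (Yb n × Ybar n) ℂ :=
  Matrix.of fun a b => if a = cnotFun n b then 1 else 0

/-- O^x = (1⊗F)·CNOT·(1⊗F) on ℂ^{Y×Ȳ}. -/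
def Oxsmall (n : ℕ) : Matrix (Yb n × Ybar n) (Yb n × Ybar n) ℂ :=
  ((1 : Matrix (Yb n) (Yb n) ℂ) ⊗ₖ Fmat n) * CNOTmat n *
    ((1 : Matrix (Yb n) (Yb n) ℂ) ⊗ₖ Fmat n)

/-- The database index set D̄ = X → Ȳ. -/
abbrev Db (n : ℕ) (X : Type*) := X → Ybar n

/-- An operator A on ℂ^Ȳ acting on the x-coordinate of ℂ^{D̄}. -/
def onCoord {n : ℕ} {X : Type*} [Fintype X] [DecidableEq X] (x : X)
    (A : Matrix (Ybar n) (Ybar n) ℂ) : Matrix (Db n X) (Db n X) ℂ :=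
  Matrix.of fun d d' => if ∀ x', x' ≠ x → d x' = d' x' then A (d x) (d' x) else 0

/-- Π^x_{D_x} : diagonal projection on ℂ^{D̄} onto databases with (x, d x) ∈ R. -/
def PiDx {n : ℕ} {X : Type*} [Fintype X] [DecidableEq X]
    (R : X → Yb n → Prop) [∀ x, DecidablePred (R x)] (x : X) :
    Matrix (Db n X) (Db n X) ℂ :=
  Matrix.diagonal fun d => if hitB R x (d x) then 1 else 0

/-- Π^∅_D : diagonal projection on ℂ^{D̄} onto databases hitting R nowhere. -/
def PiEmptyD {n : ℕ} {X : Type*} [Fintype X] [DecidableEq X]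
    (R : X → Yb n → Prop) [∀ x, DecidablePred (R x)] :
    Matrix (Db n X) (Db n X) ℂ :=
  Matrix.diagonal fun d => if ∀ x, hitB R x (d x) = false then 1 else 0

/-- CNOT_{YD_x}. -/
def cnotDFun {n : ℕ} {X : Type*} (x : X) : Yb n × Db n X → Yb n × Db n X :=
  fun p => Option.casesOn (p.2 x) p fun yx => (xorY p.1 yx, p.2)

def CNOTD {n : ℕ} {X : Type*} [Fintype X] [DecidableEq X] (x : X) :
    Matrix (Yb n × Db n X) (Yb n × Db n X) ℂ :=
  Matrix.of fun a b => if a = cnotDFun x b then 1 else 0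

/-- F_{D_x}. -/
def FDx (n : ℕ) {X : Type*} [Fintype X] [DecidableEq X] (x : X) :
    Matrix (Db n X) (Db n X) ℂ :=
  onCoord x (Fmat n)

/-- O^x_{YD_x} = F_{D_x}·CNOT_{YD_x}·F_{D_x} on ℂ^{Y×D̄}. -/
def OxD (n : ℕ) {X : Type*} [Fintype X] [DecidableEq X] (x : X) :
    Matrix (Yb n × Db n X) (Yb n × Db n X) ℂ :=
  ((1 : Matrix (Yb n) (Yb n) ℂ) ⊗ₖ FDx n x) * CNOTD x *
    ((1 : Matrix (Yb n) (Yb n) ℂ) ⊗ₖ FDx n x)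

/-- O_{XYD} = ∑_x |x⟩⟨x| ⊗ O^x_{YD_x} on ℂ^{X×Y×D̄}. -/
def OXYD (n : ℕ) (X : Type*) [Fintype X] [DecidableEq X] :
    Matrix (X × Yb n × Db n X) (X × Yb n × Db n X) ℂ :=
  Matrix.of fun p q =>
    if p.1 = q.1 then OxD n p.1 (p.2.1, p.2.2) (q.2.1, q.2.2) else 0

/-- The pointer set P = ZMod (|X|+1). -/
abbrev Ptr (X : Type*) [Fintype X] := ZMod (Fintype.card X + 1)

/-- Encoding of X into the nonzero elements of ZMod (|X|+1). -/
def encodeX {X : Type*} [Fintype X] (x : X) : Ptr X :=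
  (((Fintype.equivFin X x : ℕ) + 1 : ℕ) : Ptr X)

/-- ext(d): the smallest x ∈ X with (x, d x) ∈ R, encoded in ZMod (|X|+1); ∅ ↦ 0. -/
def extD {n : ℕ} {X : Type*} [Fintype X] [LinearOrder X] (R : X → Yb n → Prop)
    [∀ x, DecidablePred (R x)] (d : Db n X) : Ptr X :=
  if h : (Finset.univ.filter fun x => hitB R x (d x) = true).Nonempty then
    encodeX ((Finset.univ.filter fun x => hitB R x (d x) = true).min' h)
  else 0

/-- The purified measurement M_{DP} : |d⟩⊗|w⟩ ↦ |d⟩⊗|w + ext(d)⟩ on ℂ^{D̄×P}. -/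
def MDP {n : ℕ} {X : Type*} [Fintype X] [LinearOrder X] (R : X → Yb n → Prop)
    [∀ x, DecidablePred (R x)] :
    Matrix (Db n X × Ptr X) (Db n X × Ptr X) ℂ :=
  Matrix.of fun p q => if p = (q.1, q.2 + extD R q.1) then 1 else 0

/-- O^x_{YD_x} ⊗ 1_P on ℂ^{Y×D̄×P}. -/
def OxDP (n : ℕ) {X : Type*} [Fintype X] [DecidableEq X] (x : X) :
    Matrix (Yb n × Db n X × Ptr X) (Yb n × Db n X × Ptr X) ℂ :=
  Matrix.of fun p q =>
    if p.2.2 = q.2.2 then OxD n x (p.1, p.2.1) (q.1, q.2.1) else 0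

/-- 1_Y ⊗ M_{DP} on ℂ^{Y×D̄×P}. -/
def MYDP {n : ℕ} {X : Type*} [Fintype X] [LinearOrder X] (R : X → Yb n → Prop)
    [∀ x, DecidablePred (R x)] :
    Matrix (Yb n × Db n X × Ptr X) (Yb n × Db n X × Ptr X) ℂ :=
  Matrix.of fun p q =>
    if p.1 = q.1 then MDP R (p.2.1, p.2.2) (q.2.1, q.2.2) else 0

/-- O_{XYD} ⊗ 1_P on ℂ^{X×Y×D̄×P}. -/
def OXYDP (n : ℕ) (X : Type*) [Fintype X] [DecidableEq X] :
    Matrix (X × Yb n × Db n X × Ptr X) (X × Yb n × Db n X × Ptr X) ℂ :=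
  Matrix.of fun p q =>
    if p.2.2.2 = q.2.2.2 then
      OXYD n X (p.1, p.2.1, p.2.2.1) (q.1, q.2.1, q.2.2.1)
    else 0

/-- 1_{X×Y} ⊗ M_{DP} on ℂ^{X×Y×D̄×P}. -/
def MXYDP {n : ℕ} {X : Type*} [Fintype X] [LinearOrder X] (R : X → Yb n → Prop)
    [∀ x, DecidablePred (R x)] :
    Matrix (X × Yb n × Db n X × Ptr X) (X × Yb n × Db n X × Ptr X) ℂ :=
  Matrix.of fun p q =>
    if p.1 = q.1 ∧ p.2.1 = q.2.1 then
      MDP R (p.2.2.1, p.2.2.2) (q.2.2.1, q.2.2.2)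
    else 0








-- helper instance (Lean struggles to find this by search)
instance instDEq4 (n : ℕ) (X : Type*) [Fintype X] [DecidableEq X] :
    DecidableEq (X × Yb n × Db n X × Ptr X) :=
  instDecidableEqProd


-- extensions to the five-register space W × X × Y × D̄ × P
/-- 1_W ⊗ O_{XYD} ⊗ 1_P on ℂ^{W×X×Y×D̄×P}. -/
def OW (n : ℕ) (W X : Type*) [Fintype X] [DecidableEq X] [DecidableEq W] :
    Matrix (W × X × Yb n × Db n X × Ptr X) (W × X × Yb n × Db n X × Ptr X) ℂ :=
  Matrix.of fun p q =>
    if p.1 = q.1 ∧ p.2.2.2.2 = q.2.2.2.2 then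
      OXYD n X (p.2.1, p.2.2.1, p.2.2.2.1) (q.2.1, q.2.2.1, q.2.2.2.1)
    else 0

/-- 1_{W×X×Y} ⊗ M_{DP} on ℂ^{W×X×Y×D̄×P}. -/
def MW {n : ℕ} (W : Type*) {X : Type*} [Fintype X] [LinearOrder X] [DecidableEq W]
    (R : X → Yb n → Prop) [∀ x, DecidablePred (R x)] :
    Matrix (W × X × Yb n × Db n X × Ptr X) (W × X × Yb n × Db n X × Ptr X) ℂ :=
  Matrix.of fun p q =>
    if p.1 = q.1 ∧ p.2.1 = q.2.1 ∧ p.2.2.1 = q.2.2.1 then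
      MDP R (p.2.2.2.1, p.2.2.2.2) (q.2.2.2.1, q.2.2.2.2)
    else 0

instance instDEq5 (n : ℕ) (W X : Type*) [Fintype X] [DecidableEq X] [DecidableEq W] :
    DecidableEq (W × X × Yb n × Db n X × Ptr X) :=
  instDecidableEqProd


/-- V ⊗ 1_{D̄×P} on ℂ^{W×X×Y×D̄×P}. -/
def Vext (n : ℕ) (W X : Type*) [Fintype X] [DecidableEq X]
    (V : Matrix (W × X × Yb n) (W × X × Yb n) ℂ) :
    Matrix (W × X × Yb n × Db n X × Ptr X) (W × X × Yb n × Db n X × Ptr X) ℂ :=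
  Matrix.of fun p q =>
    if p.2.2.2 = q.2.2.2 then V (p.1, p.2.1, p.2.2.1) (q.1, q.2.1, q.2.2.1) else 0

/-- Ψ = ψ ⊗ |⊥⃗⟩ ⊗ |0⟩. -/
def PsiInit (n : ℕ) {W X : Type*} [Fintype X] [DecidableEq X]
    (ψ : W × X × Yb n → ℂ) : W × X × Yb n × Db n X × Ptr X → ℂ :=
  fun p =>
    if p.2.2.2.1 = (fun _ => (none : Ybar n)) ∧ p.2.2.2.2 = (0 : Ptr X) then
      ψ (p.1, p.2.1, p.2.2.1)
    else 0

/-- 1_{W×X×Y×D̄} ⊗ |0⟩⟨0|_P. -/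
def ProjZeroP (n : ℕ) (W X : Type*) [Fintype X] [DecidableEq X] [DecidableEq W] :
    Matrix (W × X × Yb n × Db n X × Ptr X) (W × X × Yb n × Db n X × Ptr X) ℂ :=
  Matrix.of fun p q =>
    if p.1 = q.1 ∧ p.2.1 = q.2.1 ∧ p.2.2.1 = q.2.2.1 ∧ p.2.2.2.1 = q.2.2.2.1 ∧
        p.2.2.2.2 = (0 : Ptr X) ∧ q.2.2.2.2 = (0 : Ptr X) then 1 else 0



/-- O_{XYD} acting on registers 1, 2 and 5 of ℂ^{X×Y×X'×Y'×D̄}. -/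
def Oquery1 (n : ℕ) (X : Type*) [Fintype X] [DecidableEq X] :
    Matrix (X × Yb n × X × Yb n × Db n X) (X × Yb n × X × Yb n × Db n X) ℂ :=
  Matrix.of fun p q =>
    if p.2.2.1 = q.2.2.1 ∧ p.2.2.2.1 = q.2.2.2.1 then
      OXYD n X (p.1, p.2.1, p.2.2.2.2) (q.1, q.2.1, q.2.2.2.2)
    else 0

/-- O_{X'Y'D} acting on registers 3, 4 and 5 of ℂ^{X×Y×X'×Y'×D̄}. -/
def Oquery2 (n : ℕ) (X : Type*) [Fintype X] [DecidableEq X] :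
    Matrix (X × Yb n × X × Yb n × Db n X) (X × Yb n × X × Yb n × Db n X) ℂ :=
  Matrix.of fun p q =>
    if p.1 = q.1 ∧ p.2.1 = q.2.1 then
      OXYD n X (p.2.2.1, p.2.2.2.1, p.2.2.2.2) (q.2.2.1, q.2.2.2.1, q.2.2.2.2)
    else 0


/-- M^R_{DP} acting on registers D and P of ℂ^{D̄×P×P'}. -/
def Mext1 {n : ℕ} {X : Type*} [Fintype X] [LinearOrder X]
    (R : X → Yb n → Prop) [∀ x, DecidablePred (R x)] :
    Matrix (Db n X × Ptr X × Ptr X) (Db n X × Ptr X × Ptr X) ℂ :=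
  Matrix.of fun p q =>
    if p.2.2 = q.2.2 then MDP R (p.1, p.2.1) (q.1, q.2.1) else 0

/-- M^{R'}_{DP'} acting on registers D and P' of ℂ^{D̄×P×P'}. -/
def Mext2 {n : ℕ} {X : Type*} [Fintype X] [LinearOrder X]
    (R' : X → Yb n → Prop) [∀ x, DecidablePred (R' x)] :
    Matrix (Db n X × Ptr X × Ptr X) (Db n X × Ptr X × Ptr X) ℂ :=
  Matrix.of fun p q =>
    if p.2.1 = q.2.1 then MDP R' (p.1, p.2.2) (q.1, q.2.2) else 0



/-! Since `Sswap` is the permutation matrix of `swapBot`, `(H̄ S H̄) h h = ∑_b H̄ h (swapBot b) * H̄ b h`.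
The terms `b = ⊥` and `b = 0ⁿ` vanish because `H̄` does not mix `⊥` with `Y`, and each of the
other `2ⁿ - 1` terms is `2⁻ⁿ (-1)^{2 h·y} = 2⁻ⁿ`. The bound is `(1 - x)² ≥ 1 - 2x`. -/

theorem Matrix.mul_of_eq_apply_mul_apply {I R : Type*} [Fintype I] [DecidableEq I]
    [NonAssocSemiring R] (A B : Matrix I I R) (σ : I → I) (i j : I) :
    (A * Matrix.of (fun a b => if a = σ b then (1 : R) else 0) * B) i j =
      ∑ b, A i (σ b) * B b j := by
  simp only [Matrix.mul_apply, Matrix.of_apply, mul_ite, mul_one, mul_zero,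
    Finset.sum_ite_eq', Finset.mem_univ, if_true]

lemma signDot_comm {n : ℕ} (η y : Yb n) : signDot η y = signDot y η := by
  simp only [signDot, Bool.and_comm]

lemma signDot_mul_self {n : ℕ} (η y : Yb n) : signDot η y * signDot η y = 1 := by
  rw [signDot, ← mul_pow, neg_one_mul, neg_neg, one_pow]

lemma cst_sq (n : ℕ) : cst n ^ 2 = ((2 : ℝ) ^ n)⁻¹ := by
  rw [cst, ← Real.rpow_natCast, ← Real.rpow_mul (by norm_num), Nat.cast_ofNat,
    show -(n : ℝ) / 2 * 2 = -n by ring, Real.rpow_neg (by norm_num), Real.rpow_natCast]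

lemma Hbar_some_mul_Hbar_some {n : ℕ} (h y : Yb n) :
    Hbar n (some h) (some y) * Hbar n (some y) (some h) = ((2 : ℂ) ^ n)⁻¹ := by
  have hc : (cst n : ℂ) ^ 2 = ((2 : ℂ) ^ n)⁻¹ := by
    rw [← Complex.ofReal_pow, cst_sq]; push_cast; rfl
  calc Hbar n (some h) (some y) * Hbar n (some y) (some h)
      = (cst n : ℂ) ^ 2 * (signDot h y * signDot h y) := by
        simp only [Hbar, Matrix.of_apply, signDot_comm y h]; ring
    _ = ((2 : ℂ) ^ n)⁻¹ := by rw [signDot_mul_self, mul_one, hc]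

lemma Fmat_apply (n : ℕ) (a c : Ybar n) :
    Fmat n a c = ∑ b, Hbar n a (swapBot n b) * Hbar n b c :=
  Matrix.mul_of_eq_apply_mul_apply _ _ _ _ _

lemma Fmat_some_some_self (n : ℕ) (h : Yb n) :
    Fmat n (some h) (some h) = 1 - 1 / (2 ^ n : ℂ) := by
  have hterm (y : Yb n) : Hbar n (some h) (swapBot n (some y)) * Hbar n (some y) (some h) =
      ((2 : ℂ) ^ n)⁻¹ - if y = (fun _ => false) then ((2 : ℂ) ^ n)⁻¹ else 0 := by
    by_cases hy : y = fun _ => false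
    · simp [swapBot, hy, Hbar]
    · simp [swapBot, hy, Hbar_some_mul_Hbar_some]
  rw [Fmat_apply, Fintype.sum_option, show Hbar n none (some h) = 0 from rfl, mul_zero, zero_add]
  simp only [hterm, Finset.sum_sub_distrib, Finset.sum_const, Finset.sum_ite_eq', Finset.mem_univ,
    if_true, Finset.card_univ, Fintype.card_pi, Fintype.card_bool, Finset.prod_const,
    Fintype.card_fin, nsmul_eq_mul]
  push_cast
  field_simp

lemma one_sub_two_mul_le_norm_one_sub_sq (x : ℝ) : 1 - 2 * x ≤ ‖(1 - x : ℂ)‖ ^ 2 := by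
  rw [← Complex.ofReal_one, ← Complex.ofReal_sub, Complex.norm_real, Real.norm_eq_abs, sq_abs]
  nlinarith [sq_nonneg x]

theorem stmt6 (n : ℕ) (h : Yb n) :
    Fmat n (some h) (some h) = 1 - 1 / (2 ^ n : ℂ) ∧
      1 - 2 / (2 ^ n : ℝ) ≤ ‖Fmat n (some h) (some h)‖ ^ 2 := by
  refine ⟨Fmat_some_some_self n h, ?_⟩
  rw [Fmat_some_some_self]
  have hbound := one_sub_two_mul_le_norm_one_sub_sq (1 / 2 ^ n)
  push_cast at hbound
  rwa [mul_one_div] at hbound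

end
end

section
/- For every x ∈ X, the purified measurement M_{DP} satisfies ‖[F_{D_x} ⊗ 1_P, M_{DP}]‖ ≤ 3·‖[F_{D_x}, Π^x_{D_x}]‖ + ‖[F_{D_x}, Π^∅_D]‖ (as operators on ℂ^{D̄×P}), and ‖[O^x_{YD_x} ⊗ 1_P, 1_Y ⊗ M_{DP}]‖ ≤ 3·‖[O^x_{YD_x}, 1_Y ⊗ Π^x_{D_x}]‖ + ‖[O^x_{YD_x}, 1_Y ⊗ Π^∅_D]‖ (as operators on ℂ^{Y×D̄×P}). -/
open scoped Matrix Kronecker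

noncomputable section

/-!
Let `Π` project onto the databases `d` with `(x, d x) ∈ R`. On its range `ext d` is the least
element of `{x} ∪ {x' ≠ x | (x', d x') ∈ R}`, and off it `ext d` is `ext` of `d` with the
`x`-entry erased; neither depends on `d x`. Hence `M = M_g (Π ⊗ 1) + M_h (1 - Π ⊗ 1)` for two
controlled shifts `M_g : |d, w⟩ ↦ |d, w + g d⟩` whose controls `g` ignore `d x`, so that they
commute with `A ⊗ 1` for every `A` acting on the `x`-entry alone. This gives
`[A ⊗ 1, M] = (M_g - M_h) ([A, Π] ⊗ 1)` and `‖[A ⊗ 1, M]‖ ≤ 2 ‖[A, Π]‖`, which applies to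
`A = F_{D_x}` and, after regrouping `Y × D̄ × P` as `(Y × D̄) × P`, to `A = O^x_{YD_x}`.
-/

open Matrix Function
open scoped Matrix.Norms.L2Operator

theorem opNorm_eq_l2_opNorm {I : Type*} [Fintype I] [DecidableEq I] (A : Matrix I I ℂ) :
    opNorm A = ‖A‖ := rfl

theorem commutator_eq_mul_commutator_of_eq_add {R : Type*} [Ring R] {a m g h p : R}
    (hm : m = g * p + h * (1 - p)) (hg : Commute a g) (hh : Commute a h) :
    a * m - m * a = (g - h) * (a * p - p * a) := by
  subst hm
  simp only [mul_add, add_mul, mul_sub, sub_mul, mul_one, mul_assoc, hg.left_comm, hh.left_comm,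
    hh.eq]
  abel

theorem commM_reindex {I J : Type*} [Fintype I] [Fintype J] [DecidableEq I] [DecidableEq J]
    (e : I ≃ J) (A B : Matrix I I ℂ) :
    commM (reindex e e A) (reindex e e B) = reindex e e (commM A B) := by
  simp only [commM, ← coe_reindexAlgEquiv ℂ ℂ, map_mul, map_sub]

namespace Matrix

theorem sub_kronecker {R l m n p : Type*} [NonUnitalNonAssocRing R] (A₁ A₂ : Matrix l m R)
    (B : Matrix n p R) : (A₁ - A₂) ⊗ₖ B = A₁ ⊗ₖ B - A₂ ⊗ₖ B := by
  ext
  simp [sub_mul]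

theorem diagonal_kronecker_one {R m n : Type*} [MulZeroOneClass R] [DecidableEq m]
    [DecidableEq n] (a : m → R) :
    diagonal a ⊗ₖ (1 : Matrix n n R) = diagonal fun q => a q.1 := by
  rw [← diagonal_one, diagonal_kronecker_diagonal]
  simp

theorem kronecker_one_mulVec {R m n p : Type*} [NonAssocSemiring R] [Fintype n] [Fintype p]
    [DecidableEq p] (A : Matrix m n R) (v : n × p → R) (i : m) (k : p) :
    ((A ⊗ₖ (1 : Matrix p p R)) *ᵥ v) (i, k) = (A *ᵥ fun j => v (j, k)) i := by
  simp [mulVec, dotProduct, Fintype.sum_prod_type, one_apply]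

section L2OpNorm

variable {𝕜 m n p : Type*} [RCLike 𝕜] [Fintype m] [Fintype n] [Fintype p]
  [DecidableEq n] [DecidableEq p]

theorem l2_opNorm_le_of_mulVec {A : Matrix m n 𝕜} {c : ℝ} (hc : 0 ≤ c)
    (h : ∀ v : n → 𝕜, ∑ i, ‖(A *ᵥ v) i‖ ^ 2 ≤ c ^ 2 * ∑ j, ‖v j‖ ^ 2) : ‖A‖ ≤ c := by
  refine ContinuousLinearMap.opNorm_le_bound _ hc fun v => ?_
  rw [← pow_le_pow_iff_left₀ (norm_nonneg _) (by positivity) two_ne_zero, mul_pow,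
    EuclideanSpace.norm_sq_eq, EuclideanSpace.norm_sq_eq]
  exact h _

theorem sum_norm_mulVec_sq_le (A : Matrix m n 𝕜) (v : n → 𝕜) :
    ∑ i, ‖(A *ᵥ v) i‖ ^ 2 ≤ ‖A‖ ^ 2 * ∑ j, ‖v j‖ ^ 2 := by
  have h := pow_le_pow_left₀ (norm_nonneg _) (A.l2_opNorm_mulVec (WithLp.toLp 2 v)) 2
  rwa [mul_pow, EuclideanSpace.norm_sq_eq, EuclideanSpace.norm_sq_eq] at h

theorem l2_opNorm_reindex_le (e₁ : m ≃ p) (e₂ : n ≃ p) (A : Matrix m n 𝕜) :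
    ‖reindex e₁ e₂ A‖ ≤ ‖A‖ := by
  refine l2_opNorm_le_of_mulVec (norm_nonneg _) fun v => ?_
  simp only [reindex_apply, submatrix_mulVec_equiv, Function.comp_apply, Equiv.symm_symm]
  rw [Equiv.sum_comp e₁.symm (fun i => ‖(A *ᵥ (v ∘ e₂)) i‖ ^ 2),
    ← Equiv.sum_comp e₂ (fun j => ‖v j‖ ^ 2)]
  exact sum_norm_mulVec_sq_le A _

theorem l2_opNorm_kronecker_one_le (A : Matrix m n 𝕜) :
    ‖A ⊗ₖ (1 : Matrix p p 𝕜)‖ ≤ ‖A‖ := by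
  refine l2_opNorm_le_of_mulVec (norm_nonneg _) fun v => ?_
  rw [Fintype.sum_prod_type_right, Fintype.sum_prod_type_right, Finset.mul_sum]
  simp only [kronecker_one_mulVec]
  exact Finset.sum_le_sum fun k _ => sum_norm_mulVec_sq_le A _

end L2OpNorm

section BlockDiagonalAlong

variable {R I α β : Type*}

def IsBlockDiagonalAlong [Zero R] (f : I → α) (A : Matrix I I R) : Prop :=
  ∀ i j, A i j ≠ 0 → f i = f j

theorem IsBlockDiagonalAlong.comp [Zero R] {f : I → α} {A : Matrix I I R}
    (hA : IsBlockDiagonalAlong f A) (φ : α → β) : IsBlockDiagonalAlong (φ ∘ f) A :=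
  fun i j h => congrArg φ (hA i j h)

theorem IsBlockDiagonalAlong.mul [NonUnitalNonAssocSemiring R] [Fintype I] {f : I → α}
    {A B : Matrix I I R} (hA : IsBlockDiagonalAlong f A) (hB : IsBlockDiagonalAlong f B) :
    IsBlockDiagonalAlong f (A * B) := by
  intro i j h
  obtain ⟨k, -, hk⟩ := Finset.exists_ne_zero_of_sum_ne_zero h
  exact (hA i k (left_ne_zero_of_mul hk)).trans (hB k j (right_ne_zero_of_mul hk))

theorem IsBlockDiagonalAlong.one_kronecker {J : Type*} [MulZeroOneClass R] [DecidableEq J]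
    {f : I → α} {A : Matrix I I R} (hA : IsBlockDiagonalAlong f A) :
    IsBlockDiagonalAlong (f ∘ Prod.snd) ((1 : Matrix J J R) ⊗ₖ A) :=
  fun p q h => hA p.2 q.2 (right_ne_zero_of_mul h)

end BlockDiagonalAlong

section ControlledShift

variable {R I P : Type*}

def controlledShift [Zero R] [One R] [Add P] [DecidableEq I] [DecidableEq P] (e : I → P) :
    Matrix (I × P) (I × P) R :=
  of fun p q => if p = (q.1, q.2 + e q.1) then 1 else 0

variable [DecidableEq I] [DecidableEq P]

-- `σ.permMatrix` sends the basis vector `|q⟩` to `|σ⁻¹ q⟩`, hence the `symm`.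
theorem controlledShift_eq_permMatrix [Zero R] [One R] [AddGroup P] (e : I → P) :
    controlledShift (R := R) e =
      Equiv.Perm.permMatrix R
        (Equiv.prodShear (Equiv.refl I) fun i => Equiv.addRight (e i)).symm := by
  ext ⟨i, w⟩ ⟨j, w'⟩
  by_cases hij : i = j
  · subst hij
    simp [controlledShift, PEquiv.toMatrix_apply, eq_add_neg_iff_add_eq, eq_comm]
  · simp [controlledShift, PEquiv.toMatrix_apply, hij]

theorem norm_controlledShift_le {𝕜 : Type*} [RCLike 𝕜] [Fintype I] [Fintype P] [AddGroup P]
    (e : I → P) : ‖(controlledShift e : Matrix (I × P) (I × P) 𝕜)‖ ≤ 1 := by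
  rw [controlledShift_eq_permMatrix]
  exact permMatrix_l2_opNorm_le _

theorem commute_kronecker_one_controlledShift [NonAssocSemiring R] [Fintype I] [Fintype P]
    [AddGroup P] {A : Matrix I I R} {g : I → P} (hA : IsBlockDiagonalAlong g A) :
    Commute (A ⊗ₖ (1 : Matrix P P R)) (controlledShift g) := by
  rw [Commute, SemiconjBy, controlledShift_eq_permMatrix, Equiv.Perm.permMatrix,
    PEquiv.toMatrix_toPEquiv_mul, PEquiv.mul_toMatrix_toPEquiv]
  ext ⟨i, w⟩ ⟨j, w'⟩
  by_cases h : A i j = 0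
  · simp [h]
  · simp [one_apply, hA i j h, add_neg_eq_iff_eq_add]

theorem controlledShift_eq_add [Ring R] [Fintype I] [Fintype P] [Add P] (s : I → Prop)
    [DecidablePred s] {e g h : I → P} (hg : ∀ i, s i → e i = g i)
    (hh : ∀ i, ¬s i → e i = h i) :
    (controlledShift e : Matrix (I × P) (I × P) R) =
      controlledShift (R := R) g *
          (diagonal (fun i => if s i then 1 else 0) ⊗ₖ (1 : Matrix P P R)) +
        controlledShift (R := R) h *
          (1 - diagonal (fun i => if s i then 1 else 0) ⊗ₖ (1 : Matrix P P R)) := by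
  rw [diagonal_kronecker_one, ← diagonal_one, diagonal_sub]
  ext p q
  by_cases hq : s q.1 <;> simp [controlledShift, hq, hg, hh]

theorem norm_commM_kronecker_one_controlledShift_le [Fintype I] [Fintype P] [AddGroup P]
    (A : Matrix I I ℂ) (s : I → Prop) [DecidablePred s] {e g h : I → P}
    (hg : ∀ i, s i → e i = g i) (hh : ∀ i, ¬s i → e i = h i)
    (hAg : IsBlockDiagonalAlong g A) (hAh : IsBlockDiagonalAlong h A) :
    ‖commM (A ⊗ₖ (1 : Matrix P P ℂ)) (controlledShift e)‖ ≤
      2 * ‖commM A (diagonal fun i => if s i then 1 else 0)‖ := by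
  set Q : Matrix I I ℂ := diagonal fun i => if s i then 1 else 0
  have hcomm : commM (A ⊗ₖ (1 : Matrix P P ℂ)) (controlledShift e) =
      (controlledShift g - controlledShift h) * (commM A Q ⊗ₖ 1) := by
    rw [commM, commutator_eq_mul_commutator_of_eq_add (controlledShift_eq_add s hg hh)
      (commute_kronecker_one_controlledShift hAg) (commute_kronecker_one_controlledShift hAh),
      ← mul_kronecker_mul, ← mul_kronecker_mul, mul_one, ← sub_kronecker]
    rfl
  calc ‖commM (A ⊗ₖ (1 : Matrix P P ℂ)) (controlledShift e)‖
      ≤ ‖controlledShift g - controlledShift h‖ * ‖commM A Q ⊗ₖ (1 : Matrix P P ℂ)‖ := by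
        rw [hcomm]
        exact l2_opNorm_mul _ _
    _ ≤ (1 + 1) * ‖commM A Q‖ :=
        mul_le_mul (norm_sub_le_of_le (norm_controlledShift_le g) (norm_controlledShift_le h))
          (l2_opNorm_kronecker_one_le _) (norm_nonneg _) (by norm_num)
    _ = 2 * ‖commM A Q‖ := by norm_num

end ControlledShift

end Matrix

section Database

variable {n : ℕ} {X : Type*}

theorem isBlockDiagonalAlong_onCoord [Fintype X] [DecidableEq X] (x : X)
    (A : Matrix (Ybar n) (Ybar n) ℂ) :
    IsBlockDiagonalAlong (update · x none) (onCoord x A) := by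
  intro d d' h
  have hoff : ∀ x', x' ≠ x → d x' = d' x' := by
    by_contra hc
    simp [onCoord, hc] at h
  funext x'
  by_cases hx : x' = x
  · simp [hx]
  · simp [update_of_ne hx, hoff x' hx]

theorem isBlockDiagonalAlong_CNOTD [Fintype X] [DecidableEq X] (x : X) :
    IsBlockDiagonalAlong Prod.snd (CNOTD (n := n) x) := by
  intro p q h
  have hp : p = cnotDFun x q := by
    by_contra hc
    simp [CNOTD, hc] at h
  subst hp
  unfold cnotDFun
  cases q.2 x <;> rfl

theorem isBlockDiagonalAlong_OxD [Fintype X] [DecidableEq X] (x : X) :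
    IsBlockDiagonalAlong (fun p => update p.2 x none) (OxD n x) := by
  have hF := (isBlockDiagonalAlong_onCoord x (Fmat n)).one_kronecker (J := Yb n)
  exact (hF.mul ((isBlockDiagonalAlong_CNOTD x).comp _)).mul hF

variable [Fintype X] [LinearOrder X] (R : X → Yb n → Prop) [∀ x, DecidablePred (R x)]

def hitSet (d : Db n X) : Finset X :=
  Finset.univ.filter fun x => hitB R x (d x) = true

def encodeMin (s : Finset X) : Ptr X :=
  if h : s.Nonempty then encodeX (s.min' h) else 0

theorem extD_eq_encodeMin (d : Db n X) : extD R d = encodeMin (hitSet R d) := rfl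

theorem hitSet_update_none (d : Db n X) (x : X) :
    hitSet R (update d x none) = (hitSet R d).erase x := by
  ext x'
  simp only [hitSet, Finset.mem_erase, Finset.mem_filter, Finset.mem_univ, true_and]
  by_cases hx : x' = x
  · simp [hx, hitB]
  · simp [hx]

theorem extD_eq_of_hitB {d : Db n X} {x : X} (hx : hitB R x (d x) = true) :
    extD R d = encodeMin (insert x (hitSet R (update d x none))) := by
  rw [hitSet_update_none, Finset.insert_erase (by simpa [hitSet] using hx), extD_eq_encodeMin]

theorem extD_eq_of_not_hitB {d : Db n X} {x : X} (hx : ¬hitB R x (d x) = true) :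
    extD R d = extD R (update d x none) := by
  rw [extD_eq_encodeMin, extD_eq_encodeMin, hitSet_update_none,
    Finset.erase_eq_of_notMem (by simpa [hitSet] using hx)]

theorem norm_commM_kronecker_one_controlledShift_extD_le {I : Type*} [Fintype I]
    [DecidableEq I] (x : X) (π : I → Db n X) (A : Matrix I I ℂ)
    (hA : IsBlockDiagonalAlong (fun i => update (π i) x none) A) :
    ‖commM (A ⊗ₖ (1 : Matrix (Ptr X) (Ptr X) ℂ)) (controlledShift (extD R ∘ π))‖ ≤
      2 * ‖commM A (diagonal fun i => if hitB R x (π i x) then 1 else 0)‖ :=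
  norm_commM_kronecker_one_controlledShift_le A (fun i => hitB R x (π i x) = true)
    (fun _ hi => extD_eq_of_hitB R hi) (fun _ hi => extD_eq_of_not_hitB R hi)
    (hA.comp fun d => encodeMin (insert x (hitSet R d))) (hA.comp (extD R))

theorem norm_commM_FDx_kronecker_one_MDP_le (x : X) :
    ‖commM (FDx n x ⊗ₖ (1 : Matrix (Ptr X) (Ptr X) ℂ)) (MDP R)‖ ≤
      2 * ‖commM (FDx n x) (PiDx R x)‖ :=
  norm_commM_kronecker_one_controlledShift_extD_le R x id (FDx n x)
    (isBlockDiagonalAlong_onCoord x (Fmat n))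

theorem OxDP_eq_reindex (x : X) :
    OxDP n x = reindex (Equiv.prodAssoc _ _ _) (Equiv.prodAssoc _ _ _)
      (OxD n x ⊗ₖ (1 : Matrix (Ptr X) (Ptr X) ℂ)) := by
  ext p q
  simp [OxDP, one_apply]

theorem MYDP_eq_reindex :
    MYDP R = reindex (Equiv.prodAssoc _ _ _) (Equiv.prodAssoc _ _ _)
      (controlledShift (extD R ∘ Prod.snd) : Matrix ((Yb n × Db n X) × Ptr X) _ ℂ) := by
  ext p q
  simp [MYDP, MDP, controlledShift, Prod.ext_iff, and_assoc, ite_and]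

theorem one_kronecker_PiDx (x : X) :
    (1 : Matrix (Yb n) (Yb n) ℂ) ⊗ₖ PiDx R x =
      diagonal fun p : Yb n × Db n X => if hitB R x (p.2 x) then 1 else 0 := by
  rw [PiDx, ← diagonal_one, diagonal_kronecker_diagonal]
  simp

theorem norm_commM_OxDP_MYDP_le (x : X) :
    ‖commM (OxDP n x) (MYDP R)‖ ≤
      2 * ‖commM (OxD n x) ((1 : Matrix (Yb n) (Yb n) ℂ) ⊗ₖ PiDx R x)‖ := by
  rw [OxDP_eq_reindex, MYDP_eq_reindex, commM_reindex, one_kronecker_PiDx]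
  exact (l2_opNorm_reindex_le _ _ _).trans <|
    norm_commM_kronecker_one_controlledShift_extD_le R x Prod.snd _ (isBlockDiagonalAlong_OxD x)

end Database

theorem stmt10_general (n : ℕ) {X : Type*} [Fintype X] [LinearOrder X]
    (R : X → Yb n → Prop) [∀ x, DecidablePred (R x)] (x : X) :
    opNorm (commM (FDx n x ⊗ₖ (1 : Matrix (Ptr X) (Ptr X) ℂ)) (MDP R)) ≤
        3 * opNorm (commM (FDx n x) (PiDx R x)) + opNorm (commM (FDx n x) (PiEmptyD R)) ∧
      opNorm (commM (OxDP n x) (MYDP R)) ≤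
        3 * opNorm (commM (OxD n x) ((1 : Matrix (Yb n) (Yb n) ℂ) ⊗ₖ PiDx R x)) +
          opNorm (commM (OxD n x) ((1 : Matrix (Yb n) (Yb n) ℂ) ⊗ₖ PiEmptyD R)) := by
  have weaken : ∀ a b : ℝ, 0 ≤ a → 0 ≤ b → 2 * a ≤ 3 * a + b := fun a b ha hb => by linarith
  simp only [opNorm_eq_l2_opNorm]
  exact ⟨(norm_commM_FDx_kronecker_one_MDP_le R x).trans
      (weaken _ _ (norm_nonneg _) (norm_nonneg _)),
    (norm_commM_OxDP_MYDP_le R x).trans (weaken _ _ (norm_nonneg _) (norm_nonneg _))⟩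

theorem stmt10 (n : ℕ) {X : Type*} [Fintype X] [LinearOrder X] [Nonempty X]
    (R : X → Yb n → Prop) [∀ x, DecidablePred (R x)] (x : X) :
    opNorm (commM (FDx n x ⊗ₖ (1 : Matrix (Ptr X) (Ptr X) ℂ)) (MDP R)) ≤
        3 * opNorm (commM (FDx n x) (PiDx R x)) + opNorm (commM (FDx n x) (PiEmptyD R)) ∧
      opNorm (commM (OxDP n x) (MYDP R)) ≤
        3 * opNorm (commM (OxD n x) ((1 : Matrix (Yb n) (Yb n) ℂ) ⊗ₖ PiDx R x)) +
          opNorm (commM (OxD n x) ((1 : Matrix (Yb n) (Yb n) ℂ) ⊗ₖ PiEmptyD R)) :=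
  stmt10_general n R x

end
end
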